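/- arXiv:1504.00231 — 5 statements merged into one kernel-verified Lean document; each statement's English description precedes it below -/
import Mathlib

section
/- Let A ∈ ℝ^{m×n} with all columns of unit norm, let r be the orthogonal projection of b̂ ∈ ℝᵐ onto R(A)^⊥, let α ∈ (0,2), and let y⁰ = b̂. Suppose (y^k) satisfies y^k = y^{k-1} − α⟨y^{k-1}, A^{j_k}⟩A^{j_k}, where j_k maximizes |⟨y^{k-1}, A^j⟩| over j ∈ [n]. Then ‖y^k − r‖² ≤ (1 − δ²α(2−α)/n)·‖y^{k-1} − r‖², where δ = inf{‖Aᵀζ‖ : ζ ∈ R(A), ‖ζ‖=1}. -/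
open scoped RealInnerProductSpace
open Filter Topology

def row {m n : ℕ} (A : Matrix (Fin m) (Fin n) ℝ) (i : Fin m) :
    EuclideanSpace ℝ (Fin n) := WithLp.toLp 2 (fun j => A i j)

def col {m n : ℕ} (A : Matrix (Fin m) (Fin n) ℝ) (j : Fin n) :
    EuclideanSpace ℝ (Fin m) := WithLp.toLp 2 (fun i => A i j)

def colSpace {m n : ℕ} (A : Matrix (Fin m) (Fin n) ℝ) :
    Submodule ℝ (EuclideanSpace ℝ (Fin m)) :=
  Submodule.span ℝ (Set.range (col A))

lemma normAT_sq {m n : ℕ} (A : Matrix (Fin m) (Fin n) ℝ) (z : EuclideanSpace ℝ (Fin m)) :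
    ‖(WithLp.equiv 2 (Fin n → ℝ)).symm (A.transpose.mulVec z)‖^2
      = ∑ j, ⟪z, col A j⟫^2 := by
  rw [EuclideanSpace.norm_eq, Real.sq_sqrt (by positivity)]
  congr 1; ext j
  rw [Real.norm_eq_abs, sq_abs]
  congr 1

theorem stmt_5 {m n : ℕ} (A : Matrix (Fin m) (Fin n) ℝ)
    (hcol : ∀ j, ‖col A j‖ = 1)
    (b r : EuclideanSpace ℝ (Fin m))
    (hb : b ∈ colSpace A) (hr : r ∈ (colSpace A)ᗮ)
    (α : ℝ) (hα : α ∈ Set.Ioo (0 : ℝ) 2)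
    (y : ℕ → EuclideanSpace ℝ (Fin m)) (hy0 : y 0 = b + r)
    (jk : ℕ → Fin n)
    (hyrec : ∀ k, y (k + 1) = y k - (α * ⟪y k, col A (jk k)⟫) • col A (jk k))
    (hjmax : ∀ k j, |⟪y k, col A j⟫| ≤ |⟪y k, col A (jk k)⟫|)
    (δ : ℝ)
    (hδ : δ = sInf {t : ℝ | ∃ ζ ∈ colSpace A, ‖ζ‖ = 1 ∧
        t = ‖(WithLp.equiv 2 (Fin n → ℝ)).symm (A.transpose.mulVec ζ)‖}) :
    ∀ k, ‖y (k + 1) - r‖ ^ 2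
      ≤ (1 - δ ^ 2 * α * (2 - α) / (n : ℝ)) * ‖y k - r‖ ^ 2 := by
  obtain ⟨hα0, hα2⟩ := hα
  have hn : 0 < (n : ℝ) := by
    have : Nonempty (Fin n) := ⟨jk 0⟩
    exact_mod_cast Fin.pos (jk 0)
  have hcolmem : ∀ j, col A j ∈ colSpace A :=
    fun j => Submodule.subset_span ⟨j, rfl⟩
  -- the defining set of δ
  set S : Set ℝ := {t : ℝ | ∃ ζ ∈ colSpace A, ‖ζ‖ = 1 ∧
        t = ‖(WithLp.equiv 2 (Fin n → ℝ)).symm (A.transpose.mulVec ζ)‖} with hS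
  have hSbdd : BddBelow S := ⟨0, by rintro t ⟨ζ, -, -, rfl⟩; positivity⟩
  have hSne : S.Nonempty := by
    refine ⟨_, col A (jk 0), hcolmem _, hcol _, rfl⟩
  have hδ0 : 0 ≤ δ := by
    rw [hδ]
    exact le_csInf hSne (by rintro t ⟨ζ, -, -, rfl⟩; positivity)
  -- key estimate: δ * ‖z‖ ≤ ‖Aᵀ z‖ for z ∈ colSpace A
  have hkey : ∀ z ∈ colSpace A, δ^2 * ‖z‖^2 ≤ ∑ j, ⟪z, col A j⟫^2 := by
    intro z hz
    rcases eq_or_ne z 0 with rfl | hz0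
    · simp
    · have hnz : (0:ℝ) < ‖z‖ := norm_pos_iff.mpr hz0
      set ζ : EuclideanSpace ℝ (Fin m) := ‖z‖⁻¹ • z with hζ
      have hζmem : ζ ∈ colSpace A := (colSpace A).smul_mem _ hz
      have hζnorm : ‖ζ‖ = 1 := by
        rw [hζ, norm_smul, norm_inv, norm_norm, inv_mul_cancel₀ hnz.ne']
      have hδle : δ ≤ ‖(WithLp.equiv 2 (Fin n → ℝ)).symm (A.transpose.mulVec ζ)‖ := by
        rw [hδ]
        exact csInf_le hSbdd ⟨ζ, hζmem, hζnorm, rfl⟩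
      have hsq : δ^2 ≤ ‖(WithLp.equiv 2 (Fin n → ℝ)).symm (A.transpose.mulVec ζ)‖^2 :=
        pow_le_pow_left₀ hδ0 hδle 2
      rw [normAT_sq] at hsq
      have hζz : ∀ j, ⟪ζ, col A j⟫ = ‖z‖⁻¹ * ⟪z, col A j⟫ := by
        intro j; rw [hζ, real_inner_smul_left]
      have : δ^2 ≤ ∑ j, (‖z‖⁻¹ * ⟪z, col A j⟫)^2 := by
        simpa [hζz] using hsq
      calc δ^2 * ‖z‖^2 ≤ (∑ j, (‖z‖⁻¹ * ⟪z, col A j⟫)^2) * ‖z‖^2 := by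
            exact mul_le_mul_of_nonneg_right this (by positivity)
        _ = ∑ j, ⟪z, col A j⟫^2 := by
            rw [Finset.sum_mul]
            congr 1; ext j
            field_simp
  -- r is orthogonal to everything relevant
  have hinner_r : ∀ j, ⟪r, col A j⟫ = 0 := by
    intro j
    rw [real_inner_comm]
    exact (Submodule.mem_orthogonal _ _).mp hr _ (hcolmem j)
  have hinner_eq : ∀ k j, ⟪y k - r, col A j⟫ = ⟪y k, col A j⟫ := by
    intro k j
    rw [inner_sub_left, hinner_r, sub_zero]
  -- membership of iterates
  have hmem : ∀ k, y k - r ∈ colSpace A := by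
    intro k
    induction k with
    | zero => rw [hy0]; simpa using hb
    | succ k ih =>
      have : y (k+1) - r = (y k - r) - (α * ⟪y k, col A (jk k)⟫) • col A (jk k) := by
        rw [hyrec k]; abel
      rw [this]
      exact (colSpace A).sub_mem ih ((colSpace A).smul_mem _ (hcolmem _))
  intro k
  set t : ℝ := ⟪y k, col A (jk k)⟫ with ht
  set x : EuclideanSpace ℝ (Fin m) := y k - r with hx
  have hstep : y (k+1) - r = x - (α * t) • col A (jk k) := by
    rw [hyrec k, hx]; abel
  have hxa : ⟪x, col A (jk k)⟫ = t := hinner_eq k (jk k)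
  have hexp : ‖y (k+1) - r‖^2 = ‖x‖^2 - α * (2 - α) * t^2 := by
    rw [hstep, norm_sub_sq_real, real_inner_smul_right, hxa, norm_smul, mul_pow]
    rw [hcol (jk k)]
    simp [Real.norm_eq_abs]
    rw [mul_pow, sq_abs, sq_abs]
    ring
  -- the sum bound
  have hsum : ∑ j, ⟪x, col A j⟫^2 ≤ (n : ℝ) * t^2 := by
    calc ∑ j, ⟪x, col A j⟫^2 ≤ ∑ _j : Fin n, t^2 := by
          apply Finset.sum_le_sum
          intro j _
          have h1 : |⟪x, col A j⟫| ≤ |t| := by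
            rw [hinner_eq k j, ht]
            exact hjmax k j
          calc ⟪x, col A j⟫^2 = |⟪x, col A j⟫|^2 := (sq_abs _).symm
            _ ≤ |t|^2 := pow_le_pow_left₀ (abs_nonneg _) h1 2
            _ = t^2 := sq_abs _
      _ = (n : ℝ) * t^2 := by simp [mul_comm]
  have hmain : δ^2 * ‖x‖^2 ≤ (n : ℝ) * t^2 := le_trans (hkey x (hmem k)) hsum
  rw [hexp]
  have h1 : δ^2 * α * (2 - α) / (n : ℝ) * ‖x‖^2 ≤ α * (2 - α) * t^2 := by
    rw [div_mul_eq_mul_div, div_le_iff₀ hn]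
    have hαpos : 0 < α * (2 - α) := mul_pos hα0 (by linarith)
    calc δ^2 * α * (2 - α) * ‖x‖^2 = (α * (2 - α)) * (δ^2 * ‖x‖^2) := by ring
      _ ≤ (α * (2 - α)) * ((n : ℝ) * t^2) := by
          exact mul_le_mul_of_nonneg_left hmain hαpos.le
      _ = α * (2 - α) * t^2 * (n : ℝ) := by ring
  nlinarith [sq_nonneg ‖x‖]
end

section
/- Under the maximal-residual column selection of the extended Kaczmarz iteration with α ∈ (0,2) and δ√(α(2−α)) ≤ √n, the iterates y^k converge to r = P_{R(A)^⊥}(b̂), with geometric rate: ‖y^k − r‖ ≤ γ^k ‖b‖ where γ = (1 − δ²α(2−α)/n)^{1/2} ∈ [0,1). -/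
open scoped RealInnerProductSpace
open Filter Topology

section aux

variable {m n : ℕ} (A : Matrix (Fin m) (Fin n) ℝ)

/-- The map `z ↦ Aᵀ z` as a linear map between Euclidean spaces. -/
noncomputable def Tmap : EuclideanSpace ℝ (Fin m) →ₗ[ℝ] EuclideanSpace ℝ (Fin n) :=
  (WithLp.linearEquiv 2 ℝ (Fin n → ℝ)).symm.toLinearMap ∘ₗ
    A.transpose.mulVecLin ∘ₗ (WithLp.linearEquiv 2 ℝ (Fin m → ℝ)).toLinearMap

lemma Tmap_eq (z : EuclideanSpace ℝ (Fin m)) :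
    Tmap A z = (WithLp.equiv 2 (Fin n → ℝ)).symm (A.transpose.mulVec z) := rfl

lemma Tmap_norm_sq (z : EuclideanSpace ℝ (Fin m)) :
    ‖Tmap A z‖ ^ 2 = ∑ j, ⟪z, col A j⟫ ^ 2 := by
  rw [← real_inner_self_eq_norm_sq]
  simp only [Tmap_eq, PiLp.inner_apply, RCLike.inner_apply, conj_trivial]
  refine Finset.sum_congr rfl fun j _ => ?_
  simp [Matrix.mulVec, dotProduct, sq, PiLp.inner_apply, RCLike.inner_apply,
    col, mul_comm]

lemma Tmap_zero_mem {z : EuclideanSpace ℝ (Fin m)} (h : Tmap A z = 0) :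
    z ∈ (colSpace A)ᗮ := by
  rw [Submodule.mem_orthogonal]
  intro u hu
  induction hu using Submodule.span_induction with
  | mem v hv =>
    obtain ⟨j, rfl⟩ := hv
    have hj : ∑ i, A i j * z i = 0 := by
      have := congrFun (congrArg (WithLp.equiv 2 (Fin n → ℝ)) h) j
      simpa [Tmap_eq, Matrix.mulVec, dotProduct] using this
    simpa [PiLp.inner_apply, RCLike.inner_apply, col, mul_comm] using hj
  | zero => simp
  | add v w _ _ hv hw => rw [inner_add_left, hv, hw, add_zero]
  | smul c v _ hv => rw [inner_smul_left, hv, mul_zero]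

end aux

set_option maxHeartbeats 1000000 in
theorem stmt_6 {m n : ℕ} (A : Matrix (Fin m) (Fin n) ℝ)
    (hcol : ∀ j, ‖col A j‖ = 1)
    (b r : EuclideanSpace ℝ (Fin m))
    (hb : b ∈ colSpace A) (hr : r ∈ (colSpace A)ᗮ)
    (α : ℝ) (hα : α ∈ Set.Ioo (0 : ℝ) 2)
    (y : ℕ → EuclideanSpace ℝ (Fin m)) (hy0 : y 0 = b + r)
    (jk : ℕ → Fin n)
    (hyrec : ∀ k, y (k + 1) = y k - (α * ⟪y k, col A (jk k)⟫) • col A (jk k))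
    (hjmax : ∀ k j, |⟪y k, col A j⟫| ≤ |⟪y k, col A (jk k)⟫|)
    (δ : ℝ)
    (hδ : δ = sInf {t : ℝ | ∃ ζ ∈ colSpace A, ‖ζ‖ = 1 ∧
        t = ‖(WithLp.equiv 2 (Fin n → ℝ)).symm (A.transpose.mulVec ζ)‖})
    (hsmall : δ * Real.sqrt (α * (2 - α)) ≤ Real.sqrt n)
    (γ : ℝ) (hγ : γ = Real.sqrt (1 - δ ^ 2 * α * (2 - α) / (n : ℝ))) :
    0 ≤ γ ∧ γ < 1 ∧ ∀ k, ‖y k - r‖ ≤ γ ^ k * ‖b‖ := by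
  obtain ⟨hα0, hα2⟩ := hα
  have hn : 0 < n := (jk 0).pos
  have hnR : (0 : ℝ) < n := by exact_mod_cast hn
  set S : Set ℝ := {t : ℝ | ∃ ζ ∈ colSpace A, ‖ζ‖ = 1 ∧
      t = ‖(WithLp.equiv 2 (Fin n → ℝ)).symm (A.transpose.mulVec ζ)‖} with hS
  have hcolP : ∀ j, col A j ∈ colSpace A := fun j => Submodule.subset_span ⟨j, rfl⟩
  have hSbdd : BddBelow S := ⟨0, fun t ht => by obtain ⟨ζ, _, _, rfl⟩ := ht; positivity⟩
  -- the compact set of unit vectors in the column space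
  have hPclosed : IsClosed ((colSpace A : Set (EuclideanSpace ℝ (Fin m)))) :=
    (colSpace A).closed_of_finiteDimensional
  have hKcpt : IsCompact (Metric.sphere (0 : EuclideanSpace ℝ (Fin m)) 1 ∩ colSpace A) :=
    (isCompact_sphere 0 1).inter_right hPclosed
  have hKne : (Metric.sphere (0 : EuclideanSpace ℝ (Fin m)) 1 ∩ (colSpace A : Set _)).Nonempty := by
    refine ⟨col A ⟨0, hn⟩, ?_, hcolP _⟩
    simp [mem_sphere_zero_iff_norm, hcol]
  have hTcont : Continuous fun z => ‖Tmap A z‖ :=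
    (LinearMap.continuous_of_finiteDimensional (Tmap A)).norm
  obtain ⟨ζ₀, hζ₀K, hζ₀min⟩ := hKcpt.exists_isMinOn hKne hTcont.continuousOn
  have hζ₀P : ζ₀ ∈ colSpace A := hζ₀K.2
  have hζ₀n : ‖ζ₀‖ = 1 := mem_sphere_zero_iff_norm.mp hζ₀K.1
  have hδpos : 0 < δ := by
    have hfpos : 0 < ‖Tmap A ζ₀‖ := by
      rcases (norm_nonneg (Tmap A ζ₀)).lt_or_eq with h | h
      · exact h
      · exfalso
        have hz : Tmap A ζ₀ = 0 := by
          simpa using (norm_eq_zero.mp h.symm)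
        have : ζ₀ ∈ (colSpace A)ᗮ := Tmap_zero_mem A hz
        have : ζ₀ = 0 := by
          have := (Submodule.mem_inf.mpr ⟨hζ₀P, this⟩)
          rwa [Submodule.inf_orthogonal_eq_bot, Submodule.mem_bot] at this
        rw [this] at hζ₀n; simp at hζ₀n
    have : ∀ t ∈ S, ‖Tmap A ζ₀‖ ≤ t := by
      rintro t ⟨ζ, hζP, hζn, rfl⟩
      exact hζ₀min ⟨mem_sphere_zero_iff_norm.mpr hζn, hζP⟩
    have hSne : S.Nonempty := ⟨_, ζ₀, hζ₀P, hζ₀n, rfl⟩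
    calc (0:ℝ) < ‖Tmap A ζ₀‖ := hfpos
      _ ≤ sInf S := le_csInf hSne this
      _ = δ := hδ.symm
  -- δ ‖z‖ ≤ ‖Tmap A z‖ for z in the column space
  have hδle : ∀ z ∈ colSpace A, δ * ‖z‖ ≤ ‖Tmap A z‖ := by
    intro z hz
    rcases eq_or_ne z 0 with rfl | hz0
    · simp
    · have hzn : (0:ℝ) < ‖z‖ := norm_pos_iff.mpr hz0
      have hζ : (‖z‖⁻¹ • z) ∈ colSpace A := Submodule.smul_mem _ _ hz
      have hζn : ‖‖z‖⁻¹ • z‖ = 1 := by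
        rw [norm_smul, norm_inv, norm_norm, inv_mul_cancel₀ hzn.ne']
      have hmem : ‖Tmap A (‖z‖⁻¹ • z)‖ ∈ S := ⟨_, hζ, hζn, rfl⟩
      have h1 : δ ≤ ‖Tmap A (‖z‖⁻¹ • z)‖ := hδ ▸ csInf_le hSbdd hmem
      have h2 : ‖Tmap A (‖z‖⁻¹ • z)‖ = ‖z‖⁻¹ * ‖Tmap A z‖ := by
        rw [map_smul, norm_smul, norm_inv, norm_norm]
      rw [h2] at h1
      calc δ * ‖z‖ ≤ (‖z‖⁻¹ * ‖Tmap A z‖) * ‖z‖ := by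
            exact mul_le_mul_of_nonneg_right h1 hzn.le
        _ = ‖Tmap A z‖ := by field_simp
  -- basic facts on γ
  have hαα : 0 < α * (2 - α) := by nlinarith
  have hsq : δ ^ 2 * α * (2 - α) ≤ n := by
    have h1 : (δ * Real.sqrt (α * (2 - α))) ^ 2 ≤ Real.sqrt n ^ 2 := by
      have hl : 0 ≤ δ * Real.sqrt (α * (2 - α)) := by positivity
      exact pow_le_pow_left₀ hl hsmall 2
    rw [mul_pow, Real.sq_sqrt hαα.le, Real.sq_sqrt hnR.le] at h1
    nlinarith
  set c : ℝ := δ ^ 2 * α * (2 - α) / (n : ℝ) with hc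
  have hc0 : 0 < c := by
    apply div_pos _ hnR
    have h := mul_pos (pow_pos hδpos 2) hαα
    nlinarith [h]
  have hc1 : c ≤ 1 := by rw [hc, div_le_one hnR]; exact hsq
  have hγsq : γ ^ 2 = 1 - c := by
    rw [hγ, Real.sq_sqrt (by linarith)]
  have hγ0 : 0 ≤ γ := hγ ▸ Real.sqrt_nonneg _
  have hγ1 : γ < 1 := by
    rw [hγ]
    have : (1 : ℝ) - c < 1 := by linarith
    calc Real.sqrt (1 - c) < Real.sqrt 1 := by
          exact Real.sqrt_lt_sqrt (by linarith) this
      _ = 1 := Real.sqrt_one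
  refine ⟨hγ0, hγ1, ?_⟩
  -- orthogonality of r to the columns
  have hrc : ∀ j, ⟪r, col A j⟫ = 0 := fun j =>
    (Submodule.mem_orthogonal' _ r).mp hr _ (hcolP j)
  -- iterates stay in the affine space r + colSpace
  have hzP : ∀ k, y k - r ∈ colSpace A := by
    intro k
    induction k with
    | zero => rw [hy0]; simpa using hb
    | succ k ih =>
      rw [hyrec k, sub_right_comm]
      exact Submodule.sub_mem _ ih (Submodule.smul_mem _ _ (hcolP _))
  have hinner : ∀ k j, ⟪y k, col A j⟫ = ⟪y k - r, col A j⟫ := by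
    intro k j
    rw [inner_sub_left, hrc, sub_zero]
  -- the key one-step estimate
  have key : ∀ k, ‖y (k + 1) - r‖ ^ 2 ≤ γ ^ 2 * ‖y k - r‖ ^ 2 := by
    intro k
    set z := y k - r with hz
    set a := col A (jk k) with ha
    set t := α * ⟪y k, col A (jk k)⟫ with ht
    have hstep : y (k + 1) - r = z - t • a := by rw [hyrec k, sub_right_comm]
    have hza : ⟪z, a⟫ = ⟪y k, a⟫ := (hinner k (jk k)).symm
    have hnorm : ‖y (k + 1) - r‖ ^ 2
        = ‖z‖ ^ 2 - α * (2 - α) * ⟪y k, a⟫ ^ 2 := by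
      rw [hstep, norm_sub_sq_real, real_inner_smul_right, norm_smul, hza,
        mul_pow, hcol (jk k), ht]
      ring_nf
      rw [Real.norm_eq_abs, sq_abs]
      ring
    -- lower bound on the selected inner product
    have hmax : (δ ^ 2 / n) * ‖z‖ ^ 2 ≤ ⟪y k, a⟫ ^ 2 := by
      have hsum : ∑ j, ⟪z, col A j⟫ ^ 2 ≤ n * ⟪y k, a⟫ ^ 2 := by
        calc ∑ j, ⟪z, col A j⟫ ^ 2 ≤ ∑ _j : Fin n, ⟪y k, a⟫ ^ 2 := by
              refine Finset.sum_le_sum fun j _ => ?_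
              rw [← hinner k j]
              have := hjmax k j
              calc ⟪y k, col A j⟫ ^ 2 = |⟪y k, col A j⟫| ^ 2 := (sq_abs _).symm
                _ ≤ |⟪y k, a⟫| ^ 2 := by
                    exact pow_le_pow_left₀ (abs_nonneg _) this 2
                _ = ⟪y k, a⟫ ^ 2 := sq_abs _
          _ = n * ⟪y k, a⟫ ^ 2 := by simp [Finset.sum_const, mul_comm]
      have hlow : δ ^ 2 * ‖z‖ ^ 2 ≤ ∑ j, ⟪z, col A j⟫ ^ 2 := by
        rw [← Tmap_norm_sq]
        have h1 := hδle z (hzP k)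
        have h2 : (δ * ‖z‖) ^ 2 ≤ ‖Tmap A z‖ ^ 2 :=
          pow_le_pow_left₀ (by positivity) h1 2
        nlinarith
      rw [div_mul_eq_mul_div, div_le_iff₀ hnR]
      nlinarith
    rw [hnorm, hγsq, hc]
    have hαα' : 0 ≤ α * (2 - α) := hαα.le
    have : α * (2 - α) * ((δ ^ 2 / n) * ‖z‖ ^ 2) ≤ α * (2 - α) * ⟪y k, a⟫ ^ 2 :=
      mul_le_mul_of_nonneg_left hmax hαα'
    have hrw : (1 - δ ^ 2 * α * (2 - α) / n) * ‖z‖ ^ 2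
        = ‖z‖ ^ 2 - α * (2 - α) * ((δ ^ 2 / n) * ‖z‖ ^ 2) := by ring
    rw [hrw]
    linarith
  -- conclude by induction
  intro k
  induction k with
  | zero => simp [hy0]
  | succ k ih =>
    have h1 : ‖y (k + 1) - r‖ ^ 2 ≤ (γ * ‖y k - r‖) ^ 2 := by
      rw [mul_pow]; exact key k
    have h2 : ‖y (k + 1) - r‖ ≤ γ * ‖y k - r‖ := by
      have hger : 0 ≤ γ * ‖y k - r‖ := by positivity
      exact (pow_le_pow_iff_left₀ (norm_nonneg _) hger two_ne_zero).mp h1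
    calc ‖y (k + 1) - r‖ ≤ γ * ‖y k - r‖ := h2
      _ ≤ γ * (γ ^ k * ‖b‖) := mul_le_mul_of_nonneg_left ih hγ0
      _ = γ ^ (k + 1) * ‖b‖ := by ring
end

section
/- Let (α_k), (β_k) be nonnegative real sequences and (ε_k) a nonnegative summable sequence satisfying α_{k+1} = α_k − β_k + ε_k for all k. Then the sequence (α_k) converges. -/
open Filter Topology

theorem stmt_8 (a b e : ℕ → ℝ)
    (ha : ∀ k, 0 ≤ a k) (hb : ∀ k, 0 ≤ b k) (he : ∀ k, 0 ≤ e k)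
    (hesum : Summable e)
    (hrec : ∀ k, a (k + 1) = a k - b k + e k) :
    ∃ l : ℝ, Tendsto a atTop (nhds l) := by
  set s : ℕ → ℝ := fun k => ∑ i ∈ Finset.range k, e i with hs
  set c : ℕ → ℝ := fun k => a k - s k with hc
  have hanti : Antitone c := by
    apply antitone_nat_of_succ_le
    intro k
    have : s (k + 1) = s k + e k := Finset.sum_range_succ e k
    simp only [hc, hrec k, this]
    linarith [hb k]
  have hbdd : ∀ k, -(∑' i, e i) ≤ c k := by
    intro k
    have h1 : s k ≤ ∑' i, e i := Summable.sum_le_tsum _ (fun i _ => he i) hesum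
    have := ha k
    simp only [hc]
    linarith
  have hcconv : ∃ lc, Tendsto c atTop (nhds lc) := by
    refine ⟨⨅ k, c k, tendsto_atTop_ciInf hanti ⟨-(∑' i, e i), ?_⟩⟩
    rintro x ⟨k, rfl⟩
    exact hbdd k
  obtain ⟨lc, hlc⟩ := hcconv
  have hsconv : Tendsto s atTop (nhds (∑' i, e i)) := hesum.hasSum.tendsto_sum_nat
  refine ⟨lc + ∑' i, e i, ?_⟩
  have : a = fun k => c k + s k := by funext k; simp [hc]
  rw [this]
  exact hlc.add hsconv
end

section
/- Let r ∈ R(A)^⊥ for A ∈ ℝ^{m×n} with unit-norm columns, α ∈ (0,2), and y^k the maximal-residual extended Kaczmarz column iterates with y⁰ = b + r, b ∈ R(A). Then the sequence (‖γ_k‖²)_{k∈ℕ} is summable, where γ_k = ((r_{i_k} − y^k_{i_k})/‖A_{i_k}‖²)A_{i_k} and i_k ∈ [m] is arbitrary for each k. -/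
open scoped RealInnerProductSpace
open Filter Topology

lemma quad_min {m n : ℕ} (A : Matrix (Fin m) (Fin n) ℝ) :
    ∃ c > (0:ℝ), ∀ z ∈ colSpace A, c * ‖z‖^2 ≤ ∑ j, ⟪z, col A j⟫^2 := by
  set g : EuclideanSpace ℝ (Fin m) → ℝ := fun z => ∑ j, ⟪z, col A j⟫^2 with hg
  have hgcont : Continuous g := by
    apply continuous_finset_sum
    intro j _
    exact ((continuous_id.inner continuous_const)).pow 2
  set S : Set (EuclideanSpace ℝ (Fin m)) :=
    (colSpace A : Set _) ∩ Metric.sphere 0 1 with hS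
  have hScompact : IsCompact S := by
    apply (isCompact_sphere (0 : EuclideanSpace ℝ (Fin m)) 1).inter_left
    exact (colSpace A).closed_of_finiteDimensional
  by_cases hSe : S.Nonempty
  · obtain ⟨z₀, hz₀S, hz₀min'⟩ := hScompact.exists_isMinOn hSe hgcont.continuousOn
    obtain ⟨hz₀mem, hz₀sph⟩ := hz₀S
    have hz₀norm : ‖z₀‖ = 1 := by simpa using hz₀sph
    refine ⟨g z₀, ?_, ?_⟩
    · rcases lt_or_eq_of_le (show (0:ℝ) ≤ g z₀ from Finset.sum_nonneg fun j _ => sq_nonneg _) with h | h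
      · exact h
      · exfalso
        have horth : ∀ j, ⟪z₀, col A j⟫ = 0 := by
          intro j
          have := Finset.sum_eq_zero_iff_of_nonneg (fun j _ => sq_nonneg (⟪z₀, col A j⟫)) |>.mp h.symm j (Finset.mem_univ j)
          exact pow_eq_zero_iff (by norm_num) |>.mp this
        have : z₀ ∈ (colSpace A)ᗮ := by
          rw [Submodule.mem_orthogonal]
          intro u hu
          induction hu using Submodule.span_induction with
          | mem x hx => obtain ⟨j, rfl⟩ := hx; rw [real_inner_comm]; exact horth j
          | zero => simp
          | add x y _ _ hx hy => rw [inner_add_left, hx, hy, add_zero]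
          | smul a x _ hx => rw [inner_smul_left, hx, mul_zero]
        have : z₀ = 0 := by
          have := (Submodule.inf_orthogonal_eq_bot (colSpace A)).le
            (⟨hz₀mem, this⟩ : z₀ ∈ colSpace A ⊓ (colSpace A)ᗮ)
          simpa using this
        rw [this] at hz₀norm; simp at hz₀norm
    · intro z hz
      rcases eq_or_ne z 0 with rfl | hz0
      · simp [g]
      · have hnz : ‖z‖ ≠ 0 := norm_ne_zero_iff.mpr hz0
        have hmem : (‖z‖⁻¹ • z) ∈ S := by
          constructor
          · exact (colSpace A).smul_mem _ hz
          · simp [norm_smul, abs_of_nonneg (inv_nonneg.mpr (norm_nonneg z)), inv_mul_cancel₀ hnz]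
        have hle : g z₀ ≤ g (‖z‖⁻¹ • z) := hz₀min' hmem
        have hcalc : g (‖z‖⁻¹ • z) = (‖z‖^2)⁻¹ * g z := by
          simp only [g, Finset.mul_sum]
          congr 1
          ext j
          rw [real_inner_smul_left]
          ring
        rw [hcalc] at hle
        have h2 : (0:ℝ) < ‖z‖^2 := by positivity
        show g z₀ * ‖z‖^2 ≤ g z
        calc g z₀ * ‖z‖^2 ≤ ((‖z‖^2)⁻¹ * g z) * ‖z‖^2 := by nlinarith
          _ = g z := by field_simp
  · refine ⟨1, one_pos, ?_⟩
    intro z hz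
    rcases eq_or_ne z 0 with rfl | hz0
    · simp [g]
    · exfalso
      exact hSe ⟨‖z‖⁻¹ • z, (colSpace A).smul_mem _ hz, by
        simp [norm_smul, abs_of_nonneg (inv_nonneg.mpr (norm_nonneg z)),
          inv_mul_cancel₀ (norm_ne_zero_iff.mpr hz0)]⟩

theorem stmt_16 {m n : ℕ} (A : Matrix (Fin m) (Fin n) ℝ)
    (hrow : ∀ i, row A i ≠ 0) (hcol : ∀ j, ‖col A j‖ = 1)
    (b r : EuclideanSpace ℝ (Fin m))
    (hb : b ∈ colSpace A) (hr : r ∈ (colSpace A)ᗮ)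
    (α : ℝ) (hα : α ∈ Set.Ioo (0 : ℝ) 2)
    (y : ℕ → EuclideanSpace ℝ (Fin m)) (hy0 : y 0 = b + r)
    (jk : ℕ → Fin n)
    (hyrec : ∀ k, y (k + 1) = y k - (α * ⟪y k, col A (jk k)⟫) • col A (jk k))
    (hjmax : ∀ k j, |⟪y k, col A j⟫| ≤ |⟪y k, col A (jk k)⟫|)
    (ik : ℕ → Fin m) :
    Summable (fun k =>
      ‖((r (ik k) - y k (ik k)) / ‖row A (ik k)‖ ^ 2) • row A (ik k)‖ ^ 2) := by
  rcases Nat.eq_zero_or_pos n with rfl | hn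
  · exact (jk 0).elim0
  rcases Nat.eq_zero_or_pos m with rfl | hm
  · exact (ik 0).elim0
  obtain ⟨c, hc, hcmin⟩ := quad_min A
  -- z k = y k - r
  set z : ℕ → EuclideanSpace ℝ (Fin m) := fun k => y k - r with hz
  have hrorth : ∀ j, ⟪r, col A j⟫ = 0 := fun j => by
    rw [real_inner_comm]
    exact (Submodule.mem_orthogonal _ _).mp hr _ (Submodule.subset_span ⟨j, rfl⟩)
  have hinner : ∀ k j, ⟪y k, col A j⟫ = ⟪z k, col A j⟫ := by
    intro k j
    simp [hz, inner_sub_left, hrorth j]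
  have hzmem : ∀ k, z k ∈ colSpace A := by
    intro k
    induction k with
    | zero => simp [hz, hy0]; exact hb
    | succ k ih =>
      have : z (k+1) = z k - (α * ⟪y k, col A (jk k)⟫) • col A (jk k) := by
        simp [hz, hyrec k]; abel
      rw [this]
      exact Submodule.sub_mem _ ih (Submodule.smul_mem _ _
        (Submodule.subset_span ⟨jk k, rfl⟩))
  -- contraction factor
  set q : ℝ := max (1 - α * (2 - α) * c / n) 0 with hq
  have hq0 : 0 ≤ q := le_max_right _ _
  have hq1 : q < 1 := by
    apply max_lt _ one_pos
    have hαpos : 0 < α * (2 - α) := mul_pos hα.1 (by linarith [hα.2])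
    have : 0 < α * (2 - α) * c / n := by positivity
    linarith
  have hstep : ∀ k, ‖z (k+1)‖^2 ≤ q * ‖z k‖^2 := by
    intro k
    set t : ℝ := ⟪z k, col A (jk k)⟫ with ht
    have hzk1 : z (k+1) = z k - (α * t) • col A (jk k) := by
      simp [hz, hyrec k, hinner k (jk k), ht]; abel
    have hnormeq : ‖z (k+1)‖^2 = ‖z k‖^2 - α * (2 - α) * t^2 := by
      rw [hzk1, norm_sub_sq_real, real_inner_smul_right, norm_smul,
        Real.norm_eq_abs, hcol (jk k), ht]
      rw [mul_pow, sq_abs]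
      ring
    have hsum : c * ‖z k‖^2 ≤ ∑ j, ⟪z k, col A j⟫^2 := hcmin _ (hzmem k)
    have hsumle : ∑ j, ⟪z k, col A j⟫^2 ≤ (n : ℝ) * t^2 := by
      calc ∑ j, ⟪z k, col A j⟫^2 ≤ ∑ _j : Fin n, t^2 := by
            apply Finset.sum_le_sum
            intro j _
            have := hjmax k j
            rw [hinner k j, hinner k (jk k)] at this
            calc ⟪z k, col A j⟫^2 = |⟪z k, col A j⟫|^2 := (sq_abs _).symm
              _ ≤ |t|^2 := by apply pow_le_pow_left₀ (abs_nonneg _) this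
              _ = t^2 := sq_abs t
        _ = (n : ℝ) * t^2 := by simp [Finset.sum_const, mul_comm]
    have ht2 : c / n * ‖z k‖^2 ≤ t^2 := by
      have hnpos : (0:ℝ) < n := Nat.cast_pos.mpr hn
      rw [div_mul_eq_mul_div, div_le_iff₀ hnpos]
      nlinarith
    have hαpos : 0 < α * (2 - α) := mul_pos hα.1 (by linarith [hα.2])
    have : ‖z (k+1)‖^2 ≤ (1 - α * (2 - α) * c / n) * ‖z k‖^2 := by
      rw [hnormeq]
      have h1 : α * (2 - α) * (c / ↑n * ‖z k‖^2) ≤ α * (2 - α) * t^2 :=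
        mul_le_mul_of_nonneg_left ht2 hαpos.le
      have h2 : (1 - α * (2 - α) * c / ↑n) * ‖z k‖^2
          = ‖z k‖^2 - α * (2 - α) * (c / ↑n * ‖z k‖^2) := by ring
      linarith
    calc ‖z (k+1)‖^2 ≤ (1 - α * (2 - α) * c / n) * ‖z k‖^2 := this
      _ ≤ q * ‖z k‖^2 := by
          apply mul_le_mul_of_nonneg_right (le_max_left _ _) (by positivity)
  have hgeo : ∀ k, ‖z k‖^2 ≤ ‖z 0‖^2 * q^k := by
    intro k
    induction k with
    | zero => simp
    | succ k ih =>
      calc ‖z (k+1)‖^2 ≤ q * ‖z k‖^2 := hstep k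
        _ ≤ q * (‖z 0‖^2 * q^k) := mul_le_mul_of_nonneg_left ih hq0
        _ = ‖z 0‖^2 * q^(k+1) := by ring
  -- row norms bounded below
  have hrowpos : ∀ i, (0:ℝ) < ‖row A i‖^2 := fun i =>
    pow_pos (norm_pos_iff.mpr (hrow i)) 2
  obtain ⟨i₀, _, hi₀⟩ := Finset.exists_min_image Finset.univ
    (fun i => ‖row A i‖^2) (Finset.univ_nonempty_iff.mpr ⟨ik 0⟩)
  set ρ : ℝ := ‖row A i₀‖^2 with hρ
  have hρpos : 0 < ρ := hrowpos i₀
  -- bound each term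
  have hbound : ∀ k,
      ‖((r (ik k) - y k (ik k)) / ‖row A (ik k)‖ ^ 2) • row A (ik k)‖ ^ 2
        ≤ (‖z 0‖^2 / ρ) * q^k := by
    intro k
    have hcoord : (r (ik k) - y k (ik k))^2 ≤ ‖z k‖^2 := by
      have h1 : (r (ik k) - y k (ik k))^2 = (z k (ik k))^2 := by
        simp [hz]; ring
      rw [h1, EuclideanSpace.norm_eq]
      rw [Real.sq_sqrt (Finset.sum_nonneg fun i _ => sq_nonneg _)]
      calc (z k (ik k))^2 = ‖z k (ik k)‖^2 := by rw [Real.norm_eq_abs, sq_abs]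
        _ ≤ ∑ i, ‖z k i‖^2 := Finset.single_le_sum
              (f := fun i => ‖z k i‖^2) (fun i _ => sq_nonneg _) (Finset.mem_univ (ik k))
    have hRpos := hrowpos (ik k)
    have hRρ : ρ ≤ ‖row A (ik k)‖^2 := hi₀ (ik k) (Finset.mem_univ _)
    rw [norm_smul, Real.norm_eq_abs, mul_pow, sq_abs, div_pow]
    have hzq : ‖z k‖^2 ≤ ‖z 0‖^2 * q^k := hgeo k
    have hxx : (r (ik k) - y k (ik k))^2 / (‖row A (ik k)‖^2)^2 * ‖row A (ik k)‖^2
        = (r (ik k) - y k (ik k))^2 / ‖row A (ik k)‖^2 := by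
      field_simp
    rw [hxx]
    calc (r (ik k) - y k (ik k))^2 / ‖row A (ik k)‖^2
        ≤ (‖z 0‖^2 * q^k) / ρ := div_le_div₀ (by positivity) (hcoord.trans hzq) hρpos hRρ
      _ = ‖z 0‖^2 / ρ * q^k := by ring
  apply Summable.of_nonneg_of_le (fun k => by positivity) hbound
  exact (summable_geometric_of_lt_one hq0 hq1).mul_left _
end

section
/- Let A ∈ ℝ^{m×n} have nonzero rows and unit-norm columns, b̂ = b + r with b ∈ R(A), r ∈ R(A)^⊥, and α, ω ∈ (0,2). Then the sequence (x^k) generated by the Maximal Residual Extended Kaczmarz algorithm — y^k = y^{k-1} − α⟨y^{k-1}, A^{j_k}⟩A^{j_k} with j_k maximizing |⟨y^{k-1}, A^j⟩|, b̂^k = b̂ − y^k, and x^k = x^{k-1} − ω(⟨A_{i_k}, x^{k-1}⟩ − b̂^k_{i_k})/‖A_{i_k}‖² · A_{i_k} with i_k maximizing |⟨A_i, x^{k-1}⟩ − b̂^k_i|, starting from y⁰ = b̂ and any x⁰ ∈ ℝⁿ — converges to some x̄ satisfying A x̄ = b, i.e., a least-squares solution of Ax = b̂. -/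
open scoped RealInnerProductSpace
open Filter Topology

lemma aux_c {ι : Type*} [Fintype ι] [Nonempty ι] {E : Type*} [NormedAddCommGroup E]
    [InnerProductSpace ℝ E] [FiniteDimensional ℝ E] (v : ι → E) :
    ∃ c : ℝ, 0 < c ∧ ∀ z ∈ Submodule.span ℝ (Set.range v), ∃ i, ‖z‖ ≤ c * |⟪v i, z⟫| := by
  set S := Submodule.span ℝ (Set.range v) with hS
  let T : E →ₗ[ℝ] (ι → ℝ) :=
    { toFun := fun z i => ⟪v i, z⟫
      map_add' := fun a b => by ext i; simp [inner_add_right]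
      map_smul' := fun c a => by ext i; simp [inner_smul_right] }
  let T' : S →ₗ[ℝ] (ι → ℝ) := T.comp S.subtype
  have hker : LinearMap.ker T' = ⊥ := by
    rw [LinearMap.ker_eq_bot']
    intro w hw
    have hperp : (w : E) ∈ Sᗮ := by
      rw [Submodule.mem_orthogonal]
      intro u hu
      induction hu using Submodule.span_induction with
      | mem u hu =>
        obtain ⟨i, rfl⟩ := hu
        exact congrFun hw i
      | zero => simp
      | add u₁ u₂ _ _ h1 h2 => rw [inner_add_left, h1, h2, add_zero]
      | smul c u _ h => rw [inner_smul_left, h, mul_zero]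
    have : (w : E) = 0 := by
      have := Submodule.inner_right_of_mem_orthogonal w.2 hperp
      rwa [inner_self_eq_zero] at this
    exact Subtype.ext this
  obtain ⟨K, hK, hant⟩ := T'.exists_antilipschitzWith hker
  refine ⟨K, hK, fun z hz => ?_⟩
  obtain ⟨i₀, -, hi₀⟩ := Finset.exists_max_image Finset.univ
    (fun i => |⟪v i, z⟫|) Finset.univ_nonempty
  refine ⟨i₀, ?_⟩
  have h1 : ‖(⟨z, hz⟩ : S)‖ ≤ K * ‖T' ⟨z, hz⟩‖ := by
    have := hant.le_mul_dist (⟨z, hz⟩ : S) 0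
    simpa [dist_zero_right] using this
  have h2 : ‖T' (⟨z, hz⟩ : S)‖ ≤ |⟪v i₀, z⟫| := by
    rw [pi_norm_le_iff_of_nonneg (abs_nonneg _)]
    intro i
    simpa [T', T, Real.norm_eq_abs] using hi₀ i (Finset.mem_univ i)
  calc ‖z‖ = ‖(⟨z, hz⟩ : S)‖ := rfl
    _ ≤ K * ‖T' ⟨z, hz⟩‖ := h1
    _ ≤ K * |⟪v i₀, z⟫| := by
      exact mul_le_mul_of_nonneg_left h2 (le_of_lt hK)
lemma seq_to_zero (a : ℕ → ℝ) (ha : ∀ k, 0 ≤ a k) (ρ q D : ℝ)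
    (hρ0 : 0 ≤ ρ) (hρ1 : ρ < 1) (hq0 : 0 ≤ q) (hq1 : q < 1) (hD : 0 ≤ D)
    (hrec : ∀ k, a (k + 1) ≤ ρ * a k + D * q ^ k) :
    Tendsto a atTop (nhds 0) := by
  set s := max ρ q with hs
  have hs0 : 0 ≤ s := le_trans hρ0 (le_max_left _ _)
  have hs1 : s < 1 := max_lt hρ1 hq1
  have hρs : ρ ≤ s := le_max_left _ _
  have hqs : q ≤ s := le_max_right _ _
  have key : ∀ k, a (k + 1) ≤ s ^ (k + 1) * a 0 + ((k : ℝ) + 1) * D * s ^ k := by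
    intro k
    induction k with
    | zero =>
      have := hrec 0
      simp only [pow_zero, mul_one, pow_one] at this ⊢
      have h1 : ρ * a 0 ≤ s * a 0 := mul_le_mul_of_nonneg_right hρs (ha 0)
      push_cast
      nlinarith
    | succ k ih =>
      have h1 := hrec (k + 1)
      have h2 : ρ * a (k + 1) ≤ s * a (k + 1) := mul_le_mul_of_nonneg_right hρs (ha _)
      have h3 : s * a (k + 1) ≤ s * (s ^ (k + 1) * a 0 + ((k : ℝ) + 1) * D * s ^ k) :=
        mul_le_mul_of_nonneg_left ih hs0
      have h4 : D * q ^ (k + 1) ≤ D * s ^ (k + 1) :=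
        mul_le_mul_of_nonneg_left (pow_le_pow_left₀ hq0 hqs _) hD
      have : a (k + 2) ≤ s * (s ^ (k + 1) * a 0 + ((k : ℝ) + 1) * D * s ^ k) + D * s ^ (k + 1) := by
        linarith
      calc a (k + 2) ≤ s * (s ^ (k + 1) * a 0 + ((k : ℝ) + 1) * D * s ^ k) + D * s ^ (k + 1) := this
        _ = s ^ (k + 2) * a 0 + ((k : ℝ) + 1 + 1) * D * s ^ (k + 1) := by ring
        _ = s ^ (k + 1 + 1) * a 0 + ((↑(k + 1) : ℝ) + 1) * D * s ^ (k + 1) := by push_cast; ring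
  have hlim : Tendsto (fun k : ℕ => s ^ (k + 1) * a 0 + ((k : ℝ) + 1) * D * s ^ k) atTop (nhds 0) := by
    have l1 : Tendsto (fun k : ℕ => s ^ (k + 1) * a 0) atTop (nhds 0) := by
      have := (tendsto_pow_atTop_nhds_zero_of_lt_one hs0 hs1).mul_const (a 0)
      rw [zero_mul] at this
      exact (this.comp (tendsto_add_atTop_nat 1))
    have l2 : Tendsto (fun k : ℕ => ((k : ℝ) + 1) * D * s ^ k) atTop (nhds 0) := by
      have h1 : Tendsto (fun k : ℕ => (k : ℝ) * s ^ k) atTop (nhds 0) :=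
        tendsto_self_mul_const_pow_of_lt_one hs0 hs1
      have h2 : Tendsto (fun k : ℕ => (s : ℝ) ^ k) atTop (nhds 0) :=
        tendsto_pow_atTop_nhds_zero_of_lt_one hs0 hs1
      have := ((h1.add h2).mul_const D)
      rw [add_zero, zero_mul] at this
      convert this using 2 with k
      ring
    have := l1.add l2
    rwa [add_zero] at this
  have : Tendsto (fun k => a (k + 1)) atTop (nhds 0) := by
    apply squeeze_zero (fun k => ha (k + 1)) key hlim
  exact (tendsto_add_atTop_iff_nat 1).mp this

lemma abs_coord_le_norm {m : ℕ} (v : EuclideanSpace ℝ (Fin m)) (i : Fin m) :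
    |v i| ≤ ‖v‖ := by
  have h1 : |v i| ^ 2 ≤ ‖v‖ ^ 2 := by
    rw [EuclideanSpace.norm_eq, Real.sq_sqrt (by positivity)]
    have := Finset.single_le_sum (f := fun j => ‖v j‖ ^ 2)
      (fun j _ => by positivity) (Finset.mem_univ i)
    simpa [sq_abs, Real.norm_eq_abs] using this
  nlinarith [abs_nonneg (v i), norm_nonneg v]

lemma mulVec_eq_inner {m n : ℕ} (A : Matrix (Fin m) (Fin n) ℝ)
    (v : EuclideanSpace ℝ (Fin n)) (i : Fin m) :
    A.mulVec v i = ⟪row A i, v⟫ := by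
  simp [Matrix.mulVec, dotProduct, PiLp.inner_apply, RCLike.inner_apply, row,
    RingHom.id_apply, starRingEnd_apply, mul_comm]

set_option maxHeartbeats 2000000 in
theorem stmt_18 {m n : ℕ} (A : Matrix (Fin m) (Fin n) ℝ)
    (hrow : ∀ i, row A i ≠ 0) (hcol : ∀ j, ‖col A j‖ = 1)
    (b r : EuclideanSpace ℝ (Fin m))
    (hb : b ∈ colSpace A) (hr : r ∈ (colSpace A)ᗮ)
    (α ω : ℝ) (hα : α ∈ Set.Ioo (0 : ℝ) 2) (hω : ω ∈ Set.Ioo (0 : ℝ) 2)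
    (y : ℕ → EuclideanSpace ℝ (Fin m)) (x : ℕ → EuclideanSpace ℝ (Fin n))
    (jk : ℕ → Fin n) (ik : ℕ → Fin m)
    (hy0 : y 0 = b + r)
    (hyrec : ∀ k, y (k + 1) = y k - (α * ⟪y k, col A (jk k)⟫) • col A (jk k))
    (hjmax : ∀ k j, |⟪y k, col A j⟫| ≤ |⟪y k, col A (jk k)⟫|)
    (hxrec : ∀ k, x (k + 1) = x k -
      ((ω * (⟪row A (ik k), x k⟫ - ((b + r) - y (k + 1)) (ik k))) / ‖row A (ik k)‖ ^ 2)
        • row A (ik k))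
    (himax : ∀ k i, |⟪row A i, x k⟫ - ((b + r) - y (k + 1)) i|
        ≤ |⟪row A (ik k), x k⟫ - ((b + r) - y (k + 1)) (ik k)|) :
    ∃ xbar : EuclideanSpace ℝ (Fin n),
      Tendsto x atTop (nhds xbar) ∧ A.mulVec xbar = b := by
  haveI : Nonempty (Fin m) := ⟨ik 0⟩
  haveI : Nonempty (Fin n) := ⟨jk 0⟩
  obtain ⟨hα0, hα2⟩ := hα
  obtain ⟨hω0, hω2⟩ := hω
  -- the z sequence
  set z : ℕ → EuclideanSpace ℝ (Fin m) := fun k => y k - r with hz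
  have hz0 : z 0 = b := by simp [hz, hy0]
  have hrinner : ∀ j : Fin n, ⟪r, col A j⟫ = 0 := by
    intro j
    rw [real_inner_comm]
    exact (Submodule.mem_orthogonal _ r).mp hr _ (Submodule.subset_span ⟨j, rfl⟩)
  have hinner : ∀ k j, ⟪y k, col A j⟫ = ⟪z k, col A j⟫ := by
    intro k j
    have : y k = z k + r := by simp [hz]
    rw [this, inner_add_left, hrinner, add_zero]
  have hzrec : ∀ k, z (k + 1) = z k - (α * ⟪z k, col A (jk k)⟫) • col A (jk k) := by
    intro k
    simp only [hz]
    rw [hyrec k, hinner k]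
    abel
  have hzmem : ∀ k, z k ∈ colSpace A := by
    intro k
    induction k with
    | zero => rw [hz0]; exact hb
    | succ k ih =>
      rw [hzrec k]
      exact Submodule.sub_mem _ ih (Submodule.smul_mem _ _
        (Submodule.subset_span ⟨jk k, rfl⟩))
  obtain ⟨c, hc, hcz⟩ := aux_c (col A)
  set qq : ℝ := max (1 - α * (2 - α) / c ^ 2) 0 with hqq
  have hqq0 : 0 ≤ qq := le_max_right _ _
  have hqq1 : qq < 1 := by
    apply max_lt _ one_pos
    have h0 : 0 < α * (2 - α) := by nlinarith
    have h1 : 0 < α * (2 - α) / c ^ 2 := div_pos h0 (by positivity)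
    linarith
  have hzdec : ∀ k, ‖z (k + 1)‖ ^ 2 ≤ qq * ‖z k‖ ^ 2 := by
    intro k
    set t := ⟪z k, col A (jk k)⟫ with ht
    have hnorm : ‖z (k + 1)‖ ^ 2 = ‖z k‖ ^ 2 - α * (2 - α) * t ^ 2 := by
      rw [hzrec k, norm_sub_sq_real, real_inner_smul_right, norm_smul, mul_pow,
        hcol (jk k), Real.norm_eq_abs, sq_abs]
      ring
    obtain ⟨j₀, hj₀⟩ := hcz (z k) (hzmem k)
    have hj : |⟪col A j₀, z k⟫| ≤ |t| := by
      rw [real_inner_comm]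
      have := hjmax k j₀
      rwa [hinner k j₀, hinner k (jk k)] at this
    have h1 : ‖z k‖ ≤ c * |t| := le_trans hj₀ (mul_le_mul_of_nonneg_left hj hc.le)
    have h2 : ‖z k‖ ^ 2 ≤ c ^ 2 * t ^ 2 := by
      have := mul_self_le_mul_self (norm_nonneg (z k)) h1
      calc ‖z k‖ ^ 2 = ‖z k‖ * ‖z k‖ := sq ..
        _ ≤ (c * |t|) * (c * |t|) := this
        _ = c ^ 2 * t ^ 2 := by rw [← sq_abs t]; ring
    have h3 : α * (2 - α) / c ^ 2 * ‖z k‖ ^ 2 ≤ α * (2 - α) * t ^ 2 := by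
      rw [div_mul_eq_mul_div, div_le_iff₀ (by positivity)]
      calc α * (2 - α) * ‖z k‖ ^ 2 ≤ α * (2 - α) * (c ^ 2 * t ^ 2) := by
            apply mul_le_mul_of_nonneg_left h2 (by nlinarith)
        _ = α * (2 - α) * t ^ 2 * c ^ 2 := by ring
    have h4 : (1 - α * (2 - α) / c ^ 2) * ‖z k‖ ^ 2 ≤ qq * ‖z k‖ ^ 2 :=
      mul_le_mul_of_nonneg_right (le_max_left _ _) (sq_nonneg _)
    nlinarith [h3, h4, hnorm]
  have hzbound : ∀ k, ‖z k‖ ^ 2 ≤ qq ^ k * ‖b‖ ^ 2 := by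
    intro k
    induction k with
    | zero => simp [hz0]
    | succ k ih =>
      calc ‖z (k + 1)‖ ^ 2 ≤ qq * ‖z k‖ ^ 2 := hzdec k
        _ ≤ qq * (qq ^ k * ‖b‖ ^ 2) := mul_le_mul_of_nonneg_left ih hqq0
        _ = qq ^ (k + 1) * ‖b‖ ^ 2 := by ring
  -- solution construction
  have hbr : ∃ x0' : EuclideanSpace ℝ (Fin n), A.mulVec x0' = b := by
    have hle : colSpace A ≤ (LinearMap.range A.mulVecLin).comap
        (WithLp.linearEquiv 2 ℝ (Fin m → ℝ)).toLinearMap := by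
      rw [colSpace, Submodule.span_le]
      rintro _ ⟨j, rfl⟩
      exact ⟨Pi.single j 1, by ext i; simp [col]⟩
    obtain ⟨x0', hx0'⟩ := hle hb
    exact ⟨WithLp.toLp 2 x0', hx0'⟩
  obtain ⟨x0', hx0'⟩ := hbr
  set R : Submodule ℝ (EuclideanSpace ℝ (Fin n)) :=
    Submodule.span ℝ (Set.range (row A)) with hR
  set u : EuclideanSpace ℝ (Fin n) := (Submodule.orthogonalProjectionOnto R (x 0 - x0') : EuclideanSpace ℝ (Fin n)) with hu
  set w : EuclideanSpace ℝ (Fin n) := (x 0 - x0') - u with hwdef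
  have hwperp : w ∈ Rᗮ := Submodule.sub_starProjection_mem_orthogonal (K := R) _
  set xbar : EuclideanSpace ℝ (Fin n) := x0' + w with hxbar
  have hAw : A.mulVec w = 0 := by
    funext i
    rw [mulVec_eq_inner]
    have : (row A i) ∈ R := Submodule.subset_span ⟨i, rfl⟩
    exact (Submodule.mem_orthogonal R w).mp hwperp _ this
  have hAxbar : A.mulVec xbar = b := by
    rw [hxbar, WithLp.ofLp_add, Matrix.mulVec_add, hAw, add_zero, hx0']
  refine ⟨xbar, ?_, hAxbar⟩
  -- error sequence
  set e : ℕ → EuclideanSpace ℝ (Fin n) := fun k => x k - xbar with he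
  have he0 : e 0 = u := by
    simp only [he, hxbar, hwdef]
    abel
  have he0mem : e 0 ∈ R := by rw [he0]; exact (Submodule.orthogonalProjectionOnto R (x 0 - x0')).2
  -- residual identity
  have hresid : ∀ k i, ⟪row A i, x k⟫ - ((b + r) - y (k + 1)) i
      = ⟪row A i, e k⟫ + z (k + 1) i := by
    intro k i
    have h1 : ⟪row A i, x k⟫ = ⟪row A i, e k⟫ + ⟪row A i, xbar⟫ := by
      rw [← inner_add_right]
      congr 1
      simp [he]
    have h2 : ⟪row A i, xbar⟫ = b i := by
      rw [← mulVec_eq_inner, hAxbar]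
    have h3 : ((b + r) - y (k + 1)) i = b i - z (k + 1) i := by
      simp [hz]
      ring
    rw [h1, h2, h3]
    ring
  set d : ℕ → ℝ := fun k => ⟪row A (ik k), x k⟫ - ((b + r) - y (k + 1)) (ik k) with hd
  have herec : ∀ k, e (k + 1) = e k - (ω * d k / ‖row A (ik k)‖ ^ 2) • row A (ik k) := by
    intro k
    simp only [he, hd]
    rw [hxrec k]
    abel
  have hemem : ∀ k, e k ∈ R := by
    intro k
    induction k with
    | zero => exact he0mem
    | succ k ih =>
      rw [herec k]
      exact Submodule.sub_mem _ ih (Submodule.smul_mem _ _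
        (Submodule.subset_span ⟨ik k, rfl⟩))
  -- constants
  obtain ⟨c₂, hc₂, hcz₂⟩ := aux_c (row A)
  set M : ℝ := Finset.univ.sup' Finset.univ_nonempty (fun i => ‖row A i‖ ^ 2) with hM
  set μ : ℝ := Finset.univ.inf' Finset.univ_nonempty (fun i => ‖row A i‖ ^ 2) with hμ
  have hμpos : 0 < μ := by
    rw [hμ, Finset.lt_inf'_iff]
    intro i _
    exact pow_pos (norm_pos_iff.mpr (hrow i)) 2
  have hμle : ∀ i, μ ≤ ‖row A i‖ ^ 2 := by
    intro i
    rw [hμ]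
    exact Finset.inf'_le (fun i => ‖row A i‖ ^ 2) (Finset.mem_univ i)
  have hleM : ∀ i, ‖row A i‖ ^ 2 ≤ M := by
    intro i
    rw [hM]
    exact Finset.le_sup' (fun i => ‖row A i‖ ^ 2) (Finset.mem_univ i)
  have hMpos : 0 < M := lt_of_lt_of_le hμpos (le_trans (hμle (ik 0)) (hleM (ik 0)))
  have hω2ω : 0 < ω * (2 - ω) := mul_pos hω0 (by linarith)
  set lam : ℝ := ω * (2 - ω) / M with hlam
  have hlampos : 0 < lam := div_pos hω2ω hMpos
  set cc : ℝ := 2 * ω / μ with hcc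
  have hccpos : 0 < cc := by positivity
  set CC : ℝ := cc ^ 2 / (2 * lam) with hCC
  have hCCpos : 0 < CC := by positivity
  set ρ : ℝ := max (1 - lam / (4 * c₂ ^ 2)) 0 with hρ
  have hρ0 : 0 ≤ ρ := le_max_right _ _
  have hρ1 : ρ < 1 := by
    apply max_lt _ one_pos
    have : 0 < lam / (4 * c₂ ^ 2) := by positivity
    linarith
  set D : ℝ := (CC + lam / 2) * ‖b‖ ^ 2 with hD
  have hD0 : 0 ≤ D := by positivity
  -- main per-step estimate
  have hmain : ∀ k, ‖e (k + 1)‖ ^ 2 ≤ ρ * ‖e k‖ ^ 2 + D * qq ^ k := by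
    intro k
    set N : ℝ := ‖row A (ik k)‖ ^ 2 with hN
    have hNpos : 0 < N := by
      rw [hN]
      exact pow_pos (norm_pos_iff.mpr (hrow (ik k))) 2
    set s : ℝ := ⟪row A (ik k), e k⟫ with hsdef
    set zi : ℝ := z (k + 1) (ik k) with hzi
    have hds : d k = s + zi := hresid k (ik k)
    set ε : ℝ := ‖z (k + 1)‖ with hε
    have hε0 : 0 ≤ ε := norm_nonneg _
    have hziε : |zi| ≤ ε := abs_coord_le_norm (z (k + 1)) (ik k)
    set t : ℝ := |d k| with htdef
    have ht0 : 0 ≤ t := abs_nonneg _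
    have ht2 : t ^ 2 = d k ^ 2 := sq_abs _
    have hexp : ‖e (k + 1)‖ ^ 2
        = ‖e k‖ ^ 2 - 2 * (ω * d k / N) * s + (ω * d k / N) ^ 2 * N := by
      rw [herec k, norm_sub_sq_real, real_inner_smul_right, norm_smul,
        mul_pow, Real.norm_eq_abs, sq_abs]
      rw [show (inner ℝ (e k) (row A (ik k)) : ℝ) = s from by
        rw [hsdef]; exact real_inner_comm _ _]
      rw [← hN]
      ring
    have hexp2 : ‖e (k + 1)‖ ^ 2
        = ‖e k‖ ^ 2 - (ω * (2 - ω) / N) * d k ^ 2 + (2 * ω / N) * (d k * zi) := by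
      rw [hexp, hds]
      field_simp
      ring
    -- piece 1
    have hp1 : lam * d k ^ 2 ≤ (ω * (2 - ω) / N) * d k ^ 2 := by
      apply mul_le_mul_of_nonneg_right _ (sq_nonneg _)
      exact div_le_div_of_nonneg_left hω2ω.le hNpos (hleM (ik k))
    -- piece 2
    have hp2 : (2 * ω / N) * (d k * zi) ≤ cc * (t * ε) := by
      have h1 : (2 * ω / N) * (d k * zi) ≤ (2 * ω / N) * (t * ε) := by
        apply mul_le_mul_of_nonneg_left _ (by positivity)
        calc d k * zi ≤ |d k * zi| := le_abs_self _
          _ = t * |zi| := by rw [abs_mul]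
          _ ≤ t * ε := mul_le_mul_of_nonneg_left hziε ht0
      have h2 : (2 * ω / N) * (t * ε) ≤ cc * (t * ε) := by
        apply mul_le_mul_of_nonneg_right _ (by positivity)
        exact div_le_div_of_nonneg_left (by positivity) hμpos (hμle (ik k))
      linarith
    -- AM-GM
    have hamgm : cc * (t * ε) ≤ (lam / 2) * t ^ 2 + CC * ε ^ 2 := by
      have hsq : 0 ≤ (lam * t - cc * ε) ^ 2 / (2 * lam) :=
        div_nonneg (sq_nonneg _) (by positivity)
      have hexpand : (lam * t - cc * ε) ^ 2 / (2 * lam)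
          = (lam / 2) * t ^ 2 + CC * ε ^ 2 - cc * (t * ε) := by
        rw [hCC]
        field_simp
        ring
      linarith
    -- lower bound on t
    obtain ⟨i₀, hi₀⟩ := hcz₂ (e k) (hemem k)
    have hresid₀ : |⟪row A i₀, e k⟫ + z (k + 1) i₀| ≤ t := by
      rw [htdef]
      have h := himax k i₀
      rw [hresid k i₀] at h
      exact h
    have hzi₀ : |z (k + 1) i₀| ≤ ε := abs_coord_le_norm (z (k + 1)) i₀
    have hik : |⟪row A i₀, e k⟫| ≤ t + ε := by
      have h := abs_sub (⟪row A i₀, e k⟫ + z (k + 1) i₀) (z (k + 1) i₀)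
      simp only [add_sub_cancel_right] at h
      linarith only [h, hresid₀, hzi₀]
    have hek : ‖e k‖ ≤ c₂ * (t + ε) :=
      le_trans hi₀ (mul_le_mul_of_nonneg_left hik hc₂.le)
    have h3sq : (t + ε) ^ 2 ≤ 2 * (t ^ 2 + ε ^ 2) := by
      calc (t + ε) ^ 2 = t ^ 2 + 2 * t * ε + ε ^ 2 := by ring
        _ ≤ t ^ 2 + (t ^ 2 + ε ^ 2) + ε ^ 2 := by linarith only [two_mul_le_add_sq t ε]
        _ = 2 * (t ^ 2 + ε ^ 2) := by ring
    have hlow : ‖e k‖ ^ 2 ≤ 2 * c₂ ^ 2 * (t ^ 2 + ε ^ 2) := by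
      calc ‖e k‖ ^ 2 ≤ (c₂ * (t + ε)) ^ 2 := by
            apply pow_le_pow_left₀ (norm_nonneg _) hek
        _ = c₂ ^ 2 * (t + ε) ^ 2 := by ring
        _ ≤ c₂ ^ 2 * (2 * (t ^ 2 + ε ^ 2)) := mul_le_mul_of_nonneg_left h3sq (sq_nonneg _)
        _ = 2 * c₂ ^ 2 * (t ^ 2 + ε ^ 2) := by ring
    have h5 : (lam / (4 * c₂ ^ 2)) * ‖e k‖ ^ 2 ≤ (lam / 2) * t ^ 2 + (lam / 2) * ε ^ 2 := by
      rw [div_mul_eq_mul_div, div_le_iff₀ (by positivity)]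
      calc lam * ‖e k‖ ^ 2 ≤ lam * (2 * c₂ ^ 2 * (t ^ 2 + ε ^ 2)) :=
            mul_le_mul_of_nonneg_left hlow hlampos.le
        _ = ((lam / 2) * t ^ 2 + (lam / 2) * ε ^ 2) * (4 * c₂ ^ 2) := by ring
    have h6 : (1 - lam / (4 * c₂ ^ 2)) * ‖e k‖ ^ 2 ≤ ρ * ‖e k‖ ^ 2 :=
      mul_le_mul_of_nonneg_right (le_max_left _ _) (sq_nonneg _)
    have hεb : ε ^ 2 ≤ qq ^ k * ‖b‖ ^ 2 := by
      have h1 : ε ^ 2 ≤ qq ^ (k + 1) * ‖b‖ ^ 2 := hzbound (k + 1)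
      have h2 : qq ^ (k + 1) ≤ qq ^ k := by
        calc qq ^ (k + 1) = qq * qq ^ k := by ring
          _ ≤ 1 * qq ^ k := mul_le_mul_of_nonneg_right hqq1.le (pow_nonneg hqq0 k)
          _ = qq ^ k := one_mul _
      calc ε ^ 2 ≤ qq ^ (k + 1) * ‖b‖ ^ 2 := h1
        _ ≤ qq ^ k * ‖b‖ ^ 2 := mul_le_mul_of_nonneg_right h2 (by positivity)
    have hεD : (CC + lam / 2) * ε ^ 2 ≤ D * qq ^ k := by
      rw [hD]
      calc (CC + lam / 2) * ε ^ 2 ≤ (CC + lam / 2) * (qq ^ k * ‖b‖ ^ 2) :=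
            mul_le_mul_of_nonneg_left hεb (by positivity)
        _ = (CC + lam / 2) * ‖b‖ ^ 2 * qq ^ k := by ring
    have hlt : lam * d k ^ 2 = lam * t ^ 2 := by rw [ht2]
    have h7 : ‖e (k + 1)‖ ^ 2 ≤ ‖e k‖ ^ 2 - lam * d k ^ 2 + cc * (t * ε) := by
      rw [hexp2]
      exact add_le_add (sub_le_sub_left hp1 _) hp2
    have h8 : ‖e (k + 1)‖ ^ 2 ≤ ‖e k‖ ^ 2 - (lam / 2) * t ^ 2 + CC * ε ^ 2 := by
      linarith only [h7, hamgm, hlt]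
    have h9 : ‖e (k + 1)‖ ^ 2
        ≤ (1 - lam / (4 * c₂ ^ 2)) * ‖e k‖ ^ 2 + (lam / 2) * ε ^ 2 + CC * ε ^ 2 := by
      linarith only [h8, h5]
    linarith only [h9, h6, hεD]
  -- conclusion
  have htend : Tendsto (fun k => ‖e k‖ ^ 2) atTop (nhds 0) :=
    seq_to_zero _ (fun k => sq_nonneg _) ρ qq D hρ0 hρ1 hqq0 hqq1 hD0 hmain
  have htend2 : Tendsto (fun k => ‖e k‖) atTop (nhds 0) := by
    have h1 := (Real.continuous_sqrt.tendsto 0).comp htend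
    have h2 : (fun k => Real.sqrt (‖e k‖ ^ 2)) = fun k => ‖e k‖ := by
      funext k
      exact Real.sqrt_sq (norm_nonneg _)
    rw [Function.comp_def, h2] at h1
    simpa using h1
  rw [tendsto_iff_norm_sub_tendsto_zero]
  exact htend2
end
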